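/- arXiv:1506.08520 — 2 statements merged into one kernel-verified Lean document; each statement's English description precedes it below -/
import Mathlib

section
/- Let T > 0 and let u : [0,T] × [0,1] → ℝ be a C² function satisfying the one-dimensional wave equation ∂ₜ²u = ∂ₓ²u on [0,T] × [0,1] together with the Dirichlet boundary conditions u(t,0) = u(t,1) = 0 for all t ∈ [0,T]. Then ∫₀ᵀ (∂ₓu(t,1))² dt ≥ (T − 2)·∫₀¹ [(∂ₜu)² + (∂ₓu)²](0,x) dx. -/
/-!
Multiplier method. Write `e = u_t² + u_x²`. Since `∂ₜ e = ∂ₓ (2 u_t u_x)` and `u_t` vanishes at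
`x = 0, 1`, the energy `E(t) = ∫₀¹ e(t, x) dx` is conserved. Multiplying the equation by `x u_x`
gives `∂ₜ (2 x u_x u_t) = ∂ₓ (x e) - e`; integrating over `[0, T] × [0, 1]` and using `u_t = 0`
at `x = 1`,
  `Q(T) - Q(0) = ∫₀ᵀ u_x(t, 1)² dt - T E(0)`, where `Q(t) = ∫₀¹ 2 x u_x u_t dx`.
As `|2 x u_x u_t| ≤ e` for `0 ≤ x ≤ 1`, we get `|Q(t)| ≤ E(t) = E(0)`, whence the bound.
-/

open Real Set MeasureTheory Function

noncomputable section

def partialFst (f : ℝ → ℝ → ℝ) (t x : ℝ) : ℝ := deriv (fun s => f s x) t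

def partialSnd (f : ℝ → ℝ → ℝ) (t x : ℝ) : ℝ := deriv (fun z => f t z) x

end

section Slices

variable {E : Type*} [NormedAddCommGroup E] [NormedSpace ℝ E] {g : ℝ × ℝ → E} {t x : ℝ}

theorem DifferentiableAt.hasDerivAt_slice_fst (hg : DifferentiableAt ℝ g (t, x)) :
    HasDerivAt (fun s => g (s, x)) (fderiv ℝ g (t, x) (1, 0)) t :=
  hg.hasFDerivAt.comp_hasDerivAt t ((hasDerivAt_id t).prodMk (hasDerivAt_const t x))

theorem DifferentiableAt.hasDerivAt_slice_snd (hg : DifferentiableAt ℝ g (t, x)) :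
    HasDerivAt (fun z => g (t, z)) (fderiv ℝ g (t, x) (0, 1)) x :=
  hg.hasFDerivAt.comp_hasDerivAt x ((hasDerivAt_const x t).prodMk (hasDerivAt_id x))

end Slices

section PartialDerivatives

variable {f : ℝ → ℝ → ℝ} {t x : ℝ}

theorem partialFst_eq_fderiv (hf : DifferentiableAt ℝ (uncurry f) (t, x)) :
    partialFst f t x = fderiv ℝ (uncurry f) (t, x) (1, 0) :=
  hf.hasDerivAt_slice_fst.deriv

theorem partialSnd_eq_fderiv (hf : DifferentiableAt ℝ (uncurry f) (t, x)) :
    partialSnd f t x = fderiv ℝ (uncurry f) (t, x) (0, 1) :=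
  hf.hasDerivAt_slice_snd.deriv

theorem DifferentiableAt.hasDerivAt_partialFst (hf : DifferentiableAt ℝ (uncurry f) (t, x)) :
    HasDerivAt (fun s => f s x) (partialFst f t x) t :=
  partialFst_eq_fderiv hf ▸ hf.hasDerivAt_slice_fst

theorem DifferentiableAt.hasDerivAt_partialSnd (hf : DifferentiableAt ℝ (uncurry f) (t, x)) :
    HasDerivAt (fun z => f t z) (partialSnd f t x) x :=
  partialSnd_eq_fderiv hf ▸ hf.hasDerivAt_slice_snd

theorem contDiff_partialFst {m n : WithTop ℕ∞} (hf : ContDiff ℝ n (uncurry f)) (hmn : m + 1 ≤ n) :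
    ContDiff ℝ m (uncurry (partialFst f)) := by
  have hdiff : Differentiable ℝ (uncurry f) :=
    hf.differentiable (zero_lt_one.trans_le (le_add_self.trans hmn)).ne'
  rw [show uncurry (partialFst f) = fun p => fderiv ℝ (uncurry f) p (1, 0) from
    funext fun p => partialFst_eq_fderiv (hdiff p)]
  exact (hf.fderiv_right hmn).clm_apply contDiff_const

theorem contDiff_partialSnd {m n : WithTop ℕ∞} (hf : ContDiff ℝ n (uncurry f)) (hmn : m + 1 ≤ n) :
    ContDiff ℝ m (uncurry (partialSnd f)) := by
  have hdiff : Differentiable ℝ (uncurry f) :=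
    hf.differentiable (zero_lt_one.trans_le (le_add_self.trans hmn)).ne'
  rw [show uncurry (partialSnd f) = fun p => fderiv ℝ (uncurry f) p (0, 1) from
    funext fun p => partialSnd_eq_fderiv (hdiff p)]
  exact (hf.fderiv_right hmn).clm_apply contDiff_const

theorem partialSnd_partialFst (hf : ContDiff ℝ 2 (uncurry f)) (t x : ℝ) :
    partialSnd (partialFst f) t x = partialFst (partialSnd f) t x := by
  have hdiff : Differentiable ℝ (uncurry f) := hf.differentiable (by norm_num)
  have hdiff' : DifferentiableAt ℝ (fderiv ℝ (uncurry f)) (t, x) :=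
    (hf.fderiv_right (m := 1) (by norm_num)).differentiable one_ne_zero _
  have hfst : partialFst f = fun t x => fderiv ℝ (uncurry f) (t, x) (1, 0) :=
    funext₂ fun t x => partialFst_eq_fderiv (hdiff _)
  have hsnd : partialSnd f = fun t x => fderiv ℝ (uncurry f) (t, x) (0, 1) :=
    funext₂ fun t x => partialSnd_eq_fderiv (hdiff _)
  rw [hfst, hsnd, partialSnd, partialFst,
    (hdiff'.hasDerivAt_slice_snd.clm_apply (hasDerivAt_const x (1, 0))).deriv,
    (hdiff'.hasDerivAt_slice_fst.clm_apply (hasDerivAt_const t (0, 1))).deriv]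
  simpa using (hf.contDiffAt.isSymmSndFDerivAt (by simp)) (0, 1) (1, 0)

end PartialDerivatives

section Integrals

variable {F : ℝ → ℝ → ℝ}

theorem Continuous.intervalIntegrable_slice_fst (hF : Continuous (uncurry F)) (x a b : ℝ) :
    IntervalIntegrable (fun s => F s x) volume a b :=
  (hF.comp (continuous_id.prodMk continuous_const)).intervalIntegrable a b

theorem Continuous.intervalIntegrable_slice_snd (hF : Continuous (uncurry F)) (t a b : ℝ) :
    IntervalIntegrable (fun x => F t x) volume a b :=
  (hF.comp (continuous_const.prodMk continuous_id)).intervalIntegrable a b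

theorem intervalIntegral_intervalIntegral_swap_of_continuous (hF : Continuous (uncurry F))
    (a b c d : ℝ) : ∫ x in a..b, ∫ y in c..d, F x y = ∫ y in c..d, ∫ x in a..b, F x y :=
  intervalIntegral_intervalIntegral_swap <|
    (hF.continuousOn.integrableOn_compact (isCompact_uIcc.prod isCompact_uIcc)).mono_set
      (prod_mono uIoc_subset_uIcc uIoc_subset_uIcc)

theorem integral_partialSnd (hF : ContDiff ℝ 1 (uncurry F)) (t a b : ℝ) :
    ∫ x in a..b, partialSnd F t x = F t b - F t a :=
  intervalIntegral.integral_eq_sub_of_hasDerivAt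
    (fun _ _ => (hF.differentiable one_ne_zero _).hasDerivAt_partialSnd)
    ((contDiff_partialSnd (m := 0) hF (by simp)).continuous.intervalIntegrable_slice_snd t a b)

theorem integral_sub_integral_eq_integral_integral_partialFst (hF : ContDiff ℝ 1 (uncurry F))
    (a b t₀ t : ℝ) :
    (∫ x in a..b, F t x) - ∫ x in a..b, F t₀ x = ∫ s in t₀..t, ∫ x in a..b, partialFst F s x := by
  have hF' : Continuous (uncurry (partialFst F)) :=
    (contDiff_partialFst (m := 0) hF (by simp)).continuous
  rw [← intervalIntegral.integral_sub (hF.continuous.intervalIntegrable_slice_snd t a b)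
      (hF.continuous.intervalIntegrable_slice_snd t₀ a b),
    intervalIntegral_intervalIntegral_swap_of_continuous hF']
  refine intervalIntegral.integral_congr fun x _ => ?_
  exact (intervalIntegral.integral_eq_sub_of_hasDerivAt
    (fun _ _ => (hF.differentiable one_ne_zero _).hasDerivAt_partialFst)
    (hF'.intervalIntegrable_slice_fst x t₀ t)).symm

end Integrals

theorem HasDerivAt.eq_zero_of_eqOn_Icc {g : ℝ → ℝ} {d a b s : ℝ} (hab : a < b)
    (hs : s ∈ Icc a b) (hg : HasDerivAt g d s) (hzero : EqOn g 0 (Icc a b)) : d = 0 :=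
  (uniqueDiffOn_Icc hab s hs).eq_deriv _ hg.hasDerivWithinAt
    ((hasDerivWithinAt_const s (Icc a b) 0).congr hzero (hzero hs))

noncomputable section

def energyDensity (u : ℝ → ℝ → ℝ) (t x : ℝ) : ℝ := partialFst u t x ^ 2 + partialSnd u t x ^ 2

def energyFlux (u : ℝ → ℝ → ℝ) (t x : ℝ) : ℝ := 2 * partialFst u t x * partialSnd u t x

def multiplierDensity (u : ℝ → ℝ → ℝ) (t x : ℝ) : ℝ := 2 * x * partialSnd u t x * partialFst u t x

end

section WaveEquation

variable {u : ℝ → ℝ → ℝ} {t x : ℝ}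

theorem partialFst_energyDensity (hu : ContDiff ℝ 2 (uncurry u))
    (hwave : partialFst (partialFst u) t x = partialSnd (partialSnd u) t x) :
    partialFst (energyDensity u) t x = partialSnd (energyFlux u) t x := by
  have hut : Differentiable ℝ (uncurry (partialFst u)) :=
    (contDiff_partialFst hu (by norm_num)).differentiable one_ne_zero
  have hux : Differentiable ℝ (uncurry (partialSnd u)) :=
    (contDiff_partialSnd hu (by norm_num)).differentiable one_ne_zero
  have ht : partialFst (energyDensity u) t x = _ :=
    (((hut _).hasDerivAt_partialFst.pow 2).add ((hux _).hasDerivAt_partialFst.pow 2)).deriv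
  have hx : partialSnd (energyFlux u) t x = _ :=
    (((hut _).hasDerivAt_partialSnd.const_mul 2).mul (hux _).hasDerivAt_partialSnd).deriv
  rw [ht, hx, partialSnd_partialFst hu, ← hwave]
  ring

theorem partialSnd_mul_energyDensity (hu : ContDiff ℝ 2 (uncurry u))
    (hwave : partialFst (partialFst u) t x = partialSnd (partialSnd u) t x) :
    partialSnd (fun t x => x * energyDensity u t x) t x
      = energyDensity u t x + partialFst (multiplierDensity u) t x := by
  have hut : Differentiable ℝ (uncurry (partialFst u)) :=
    (contDiff_partialFst hu (by norm_num)).differentiable one_ne_zero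
  have hux : Differentiable ℝ (uncurry (partialSnd u)) :=
    (contDiff_partialSnd hu (by norm_num)).differentiable one_ne_zero
  have he : HasDerivAt (fun z => energyDensity u t z) _ x :=
    ((hut _).hasDerivAt_partialSnd.pow 2).add ((hux _).hasDerivAt_partialSnd.pow 2)
  have hx : partialSnd (fun t x => x * energyDensity u t x) t x = _ :=
    ((hasDerivAt_id' x).mul he).deriv
  have ht : partialFst (multiplierDensity u) t x = _ :=
    (((hux _).hasDerivAt_partialFst.const_mul (2 * x)).mul (hut _).hasDerivAt_partialFst).deriv
  rw [hx, ht, partialSnd_partialFst hu, ← hwave, energyDensity]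
  ring

theorem contDiff_energyDensity (hu : ContDiff ℝ 2 (uncurry u)) :
    ContDiff ℝ 1 (uncurry (energyDensity u)) :=
  ((contDiff_partialFst hu (by norm_num)).pow 2).add ((contDiff_partialSnd hu (by norm_num)).pow 2)

theorem contDiff_energyFlux (hu : ContDiff ℝ 2 (uncurry u)) :
    ContDiff ℝ 1 (uncurry (energyFlux u)) :=
  (contDiff_const.mul (contDiff_partialFst hu (by norm_num))).mul
    (contDiff_partialSnd hu (by norm_num))

theorem contDiff_multiplierDensity (hu : ContDiff ℝ 2 (uncurry u)) :
    ContDiff ℝ 1 (uncurry (multiplierDensity u)) :=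
  ((contDiff_const.mul contDiff_snd).mul (contDiff_partialSnd hu (by norm_num))).mul
    (contDiff_partialFst hu (by norm_num))

theorem contDiff_mul_energyDensity (hu : ContDiff ℝ 2 (uncurry u)) :
    ContDiff ℝ 1 (uncurry fun t x => x * energyDensity u t x) :=
  contDiff_snd.mul (contDiff_energyDensity hu)

end WaveEquation

section WaveEnergy

variable {u : ℝ → ℝ → ℝ} {T : ℝ}

theorem partialFst_eq_zero_of_boundary {s x : ℝ} (hu : DifferentiableAt ℝ (uncurry u) (s, x))
    (hT : 0 < T) (hs : s ∈ Icc 0 T) (hbc : ∀ t ∈ Icc 0 T, u t x = 0) : partialFst u s x = 0 :=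
  hu.hasDerivAt_partialFst.eq_zero_of_eqOn_Icc hT hs fun t ht => hbc t ht

theorem integral_energyDensity_eq (hu : ContDiff ℝ 2 (uncurry u)) (hT : 0 < T)
    (hwave : ∀ t ∈ Icc 0 T, ∀ x ∈ Icc (0 : ℝ) 1,
      partialFst (partialFst u) t x = partialSnd (partialSnd u) t x)
    (hbc0 : ∀ t ∈ Icc 0 T, u t 0 = 0) (hbc1 : ∀ t ∈ Icc 0 T, u t 1 = 0)
    {t : ℝ} (ht : t ∈ Icc 0 T) :
    ∫ x in (0 : ℝ)..1, energyDensity u t x = ∫ x in (0 : ℝ)..1, energyDensity u 0 x := by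
  rw [← sub_eq_zero,
    integral_sub_integral_eq_integral_integral_partialFst (contDiff_energyDensity hu)]
  refine (intervalIntegral.integral_congr (g := 0) fun s hs => ?_).trans (by simp)
  have hs : s ∈ Icc 0 T := by
    rw [uIcc_of_le ht.1] at hs
    exact ⟨hs.1, hs.2.trans ht.2⟩
  calc ∫ x in (0 : ℝ)..1, partialFst (energyDensity u) s x
      = ∫ x in (0 : ℝ)..1, partialSnd (energyFlux u) s x :=
        intervalIntegral.integral_congr fun x hx =>
          partialFst_energyDensity hu (hwave s hs x (by simpa using hx))
    _ = energyFlux u s 1 - energyFlux u s 0 := integral_partialSnd (contDiff_energyFlux hu) s 0 1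
    _ = 0 := by
      have hdiff := hu.differentiable two_ne_zero
      simp [energyFlux, partialFst_eq_zero_of_boundary (hdiff _) hT hs hbc0,
        partialFst_eq_zero_of_boundary (hdiff _) hT hs hbc1]

theorem integral_multiplierDensity_sub (hu : ContDiff ℝ 2 (uncurry u)) (hT : 0 < T)
    (hwave : ∀ t ∈ Icc 0 T, ∀ x ∈ Icc (0 : ℝ) 1,
      partialFst (partialFst u) t x = partialSnd (partialSnd u) t x)
    (hbc0 : ∀ t ∈ Icc 0 T, u t 0 = 0) (hbc1 : ∀ t ∈ Icc 0 T, u t 1 = 0) :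
    (∫ x in (0 : ℝ)..1, multiplierDensity u T x) - ∫ x in (0 : ℝ)..1, multiplierDensity u 0 x
      = (∫ t in (0 : ℝ)..T, partialSnd u t 1 ^ 2) - T * ∫ x in (0 : ℝ)..1, energyDensity u 0 x := by
  have hE : Continuous (uncurry (energyDensity u)) := (contDiff_energyDensity hu).continuous
  have hxE : Continuous (uncurry (partialSnd fun t x => x * energyDensity u t x)) :=
    (contDiff_partialSnd (m := 0) (contDiff_mul_energyDensity hu) (by norm_num)).continuous
  have hslice : ∀ s ∈ uIcc 0 T, ∫ x in (0 : ℝ)..1, partialFst (multiplierDensity u) s x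
      = partialSnd u s 1 ^ 2 - ∫ x in (0 : ℝ)..1, energyDensity u 0 x := by
    intro s hs
    rw [uIcc_of_le hT.le] at hs
    calc ∫ x in (0 : ℝ)..1, partialFst (multiplierDensity u) s x
        = ∫ x in (0 : ℝ)..1,
            (partialSnd (fun t x => x * energyDensity u t x) s x - energyDensity u s x) :=
          intervalIntegral.integral_congr fun x hx => by
            rw [partialSnd_mul_energyDensity hu (hwave s hs x (by simpa using hx))]
            ring
      _ = 1 * energyDensity u s 1 - 0 * energyDensity u s 0
            - ∫ x in (0 : ℝ)..1, energyDensity u s x := by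
          rw [intervalIntegral.integral_sub (hxE.intervalIntegrable_slice_snd s 0 1)
            (hE.intervalIntegrable_slice_snd s 0 1),
            integral_partialSnd (contDiff_mul_energyDensity hu)]
      _ = _ := by
          rw [integral_energyDensity_eq hu hT hwave hbc0 hbc1 hs]
          simp [energyDensity,
            partialFst_eq_zero_of_boundary (hu.differentiable two_ne_zero _) hT hs hbc1]
  rw [integral_sub_integral_eq_integral_integral_partialFst (contDiff_multiplierDensity hu),
    intervalIntegral.integral_congr hslice,
    intervalIntegral.integral_sub _ intervalIntegrable_const, intervalIntegral.integral_const,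
    smul_eq_mul, sub_zero]
  exact (((contDiff_partialSnd (m := 0) hu (by norm_num)).continuous.comp
    (continuous_id.prodMk continuous_const)).pow 2).intervalIntegrable 0 T

theorem abs_integral_multiplierDensity_le (hu : ContDiff ℝ 1 (uncurry u)) (t : ℝ) :
    |∫ x in (0 : ℝ)..1, multiplierDensity u t x| ≤ ∫ x in (0 : ℝ)..1, energyDensity u t x := by
  have hut := (contDiff_partialFst (m := 0) hu (by norm_num)).continuous
  have hux := (contDiff_partialSnd (m := 0) hu (by norm_num)).continuous
  have hq : Continuous (uncurry (multiplierDensity u)) := by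
    unfold uncurry multiplierDensity; fun_prop
  have hE : Continuous (uncurry (energyDensity u)) := by
    unfold uncurry energyDensity; fun_prop
  refine (intervalIntegral.abs_integral_le_integral_abs zero_le_one).trans <|
    intervalIntegral.integral_mono_on zero_le_one (hq.intervalIntegrable_slice_snd t 0 1).abs
      (hE.intervalIntegrable_slice_snd t 0 1) fun x hx => ?_
  -- `|2 x b a| ≤ x (a² + b²) ≤ a² + b²` on `0 ≤ x ≤ 1`
  rw [multiplierDensity, energyDensity, abs_le]
  constructor <;> nlinarith [mul_nonneg hx.1 (sq_nonneg (partialSnd u t x - partialFst u t x)),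
    mul_nonneg hx.1 (sq_nonneg (partialSnd u t x + partialFst u t x)),
    mul_nonneg (sub_nonneg.2 hx.2) (add_nonneg (sq_nonneg (partialFst u t x))
      (sq_nonneg (partialSnd u t x)))]

end WaveEnergy

/-- boundary observability inequality for the 1D wave equation with
Dirichlet boundary conditions on `[0,T] × [0,1]`. -/
theorem wave_boundary_observability
    (T : ℝ) (hT : 0 < T) (u : ℝ → ℝ → ℝ)
    (hu : ContDiff ℝ 2 (fun p : ℝ × ℝ => u p.1 p.2))
    (hwave : ∀ t ∈ Icc (0:ℝ) T, ∀ x ∈ Icc (0:ℝ) 1,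
      deriv (fun s => deriv (fun s' => u s' x) s) t
        = deriv (fun z => deriv (fun z' => u t z') z) x)
    (hbc0 : ∀ t ∈ Icc (0:ℝ) T, u t 0 = 0)
    (hbc1 : ∀ t ∈ Icc (0:ℝ) T, u t 1 = 0) :
    (∫ t in (0:ℝ)..T, (deriv (fun z => u t z) 1) ^ 2)
      ≥ (T - 2) * ∫ x in (0:ℝ)..1,
          ((deriv (fun s => u s x) 0) ^ 2 + (deriv (fun z => u 0 z) x) ^ 2) := by
  change ContDiff ℝ 2 (uncurry u) at hu
  have hmultiplier := integral_multiplierDensity_sub hu hT hwave hbc0 hbc1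
  have hQ0 := abs_le.1 (abs_integral_multiplierDensity_le (hu.of_le one_le_two) 0)
  have hQT := abs_le.1 (abs_integral_multiplierDensity_le (hu.of_le one_le_two) T)
  rw [integral_energyDensity_eq hu hT hwave hbc0 hbc1 ⟨hT.le, le_rfl⟩] at hQT
  change ∫ t in (0 : ℝ)..T, partialSnd u t 1 ^ 2 ≥ (T - 2) * ∫ x in (0 : ℝ)..1, energyDensity u 0 x
  linarith [hQ0.1, hQT.2]
end

section
/- (Pohozaev identity, two-dimensional case.) In the static one-dimensional-surface setting (Q = [0,L₁]), one has ∫₀^{L₁} (G(η)ψ)(x)·x·∂ₓψ(x) dx = (L₁/2)∫₋ₕ^{η(L₁)} (∂_yϕ(L₁,y))² dy + (h/2)∫₀^{L₁} (∂ₓϕ(x,−h))² dx + (1/2)∫₀^{L₁} (η(x) − x·∂ₓη(x))·(V(x)² + B(x)² − 2B(x)·G(η)ψ(x)) dx. -/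
open Real Set MeasureTheory

noncomputable section

/-- `∂ₓϕ(x,y)` -/
def phX (ϕ : ℝ → ℝ → ℝ) (x y : ℝ) : ℝ := deriv (fun x' => ϕ x' y) x

/-- `∂_yϕ(x,y)` -/
def phY (ϕ : ℝ → ℝ → ℝ) (x y : ℝ) : ℝ := deriv (fun y' => ϕ x y') y

/-!
Write `P = ∂ₓϕ`, `Q = ∂_yϕ`. The Rellich field `R = (X·∇ϕ) ∇ϕ - |∇ϕ|² X / 2` with `X = (x, y)`,
i.e. `R = (x (P² - Q²)/2 + y P Q, x P Q + y (Q² - P²)/2)`, has divergence `(X·∇ϕ) Δϕ = 0`, so its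
flux through `∂Ω` vanishes. By the boundary conditions the walls `x = 0`, `x = L₁` and the bottom
`y = -h` contribute `-(L₁/2) ∫ Q²` and `-(h/2) ∫ P²`, while on the surface the flux density
`R₂ - η' R₁` differs from `G(η)ψ · x ∂ₓψ` by `(η - x η') (V² + B² - 2 B G(η)ψ) / 2` pointwise.

The divergence theorem on `Ω` is reduced to the one on a rectangle: the Piola transform along
`(x, t) ↦ (x, b + (η x - b) t)` turns a field on the region between `y = b` and `y = η x` into one
on the strip `0 ≤ t ≤ 1` whose divergence is that of the original field times the Jacobian
`η x - b`, and whose fluxes through the sides of the rectangle are those through the sides of the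
region.
-/

def partialX (f : ℝ × ℝ → ℝ) (z : ℝ × ℝ) : ℝ := fderiv ℝ f z (1, 0)

def partialY (f : ℝ × ℝ → ℝ) (z : ℝ × ℝ) : ℝ := fderiv ℝ f z (0, 1)

section PartialDerivatives

variable {f : ℝ × ℝ → ℝ}

theorem fderiv_apply_eq_partialX_add_partialY (f : ℝ × ℝ → ℝ) (z v : ℝ × ℝ) :
    fderiv ℝ f z v = v.1 * partialX f z + v.2 * partialY f z := by
  conv_lhs => rw [show v = v.1 • ((1 : ℝ), (0 : ℝ)) + v.2 • ((0 : ℝ), (1 : ℝ)) by ext <;> simp]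
  rw [map_add, map_smul, map_smul, smul_eq_mul, smul_eq_mul, partialX, partialY]

theorem DifferentiableAt.hasDerivAt_comp_prodMk {u v : ℝ → ℝ} {u' v' s : ℝ}
    (hf : DifferentiableAt ℝ f (u s, v s)) (hu : HasDerivAt u u' s) (hv : HasDerivAt v v' s) :
    HasDerivAt (fun s => f (u s, v s))
      (u' * partialX f (u s, v s) + v' * partialY f (u s, v s)) s := by
  rw [← fderiv_apply_eq_partialX_add_partialY f _ (u', v')]
  exact hf.hasFDerivAt.comp_hasDerivAt s (hu.prodMk hv)

theorem DifferentiableAt.hasDerivAt_partialX {x y : ℝ} (hf : DifferentiableAt ℝ f (x, y)) :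
    HasDerivAt (fun x' => f (x', y)) (partialX f (x, y)) x := by
  simpa using hf.hasDerivAt_comp_prodMk (hasDerivAt_id x) (hasDerivAt_const x y)

theorem DifferentiableAt.hasDerivAt_partialY {x y : ℝ} (hf : DifferentiableAt ℝ f (x, y)) :
    HasDerivAt (fun y' => f (x, y')) (partialY f (x, y)) y := by
  simpa using hf.hasDerivAt_comp_prodMk (hasDerivAt_const y x) (hasDerivAt_id y)

theorem ContDiff.partialY_partialX_comm (hf : ContDiff ℝ 2 f) (z : ℝ × ℝ) :
    partialY (partialX f) z = partialX (partialY f) z := by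
  have hf' : Differentiable ℝ (fderiv ℝ f) :=
    (hf.fderiv_right (m := 1) (by norm_num)).differentiable one_ne_zero
  have hfd : ∀ v, fderiv ℝ (fun z => fderiv ℝ f z v) z = (fderiv ℝ (fderiv ℝ f) z).flip v := by
    intro v
    rw [fderiv_clm_apply (hf' z) (differentiableAt_const v)]
    simp
  change fderiv ℝ (fun z => fderiv ℝ f z (1, 0)) z (0, 1)
    = fderiv ℝ (fun z => fderiv ℝ f z (0, 1)) z (1, 0)
  rw [hfd, hfd]
  exact (hf.contDiffAt.isSymmSndFDerivAt (by simp)) _ _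

theorem ContDiff.differentiable_partialX (hf : ContDiff ℝ 2 f) : Differentiable ℝ (partialX f) :=
  ((hf.fderiv_right (m := 1) (by norm_num)).clm_apply contDiff_const).differentiable one_ne_zero

theorem ContDiff.differentiable_partialY (hf : ContDiff ℝ 2 f) : Differentiable ℝ (partialY f) :=
  ((hf.fderiv_right (m := 1) (by norm_num)).clm_apply contDiff_const).differentiable one_ne_zero

theorem phX_eq_partialX {ϕ : ℝ → ℝ → ℝ} {x y : ℝ}
    (hϕ : DifferentiableAt ℝ (fun p : ℝ × ℝ => ϕ p.1 p.2) (x, y)) :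
    phX ϕ x y = partialX (fun p : ℝ × ℝ => ϕ p.1 p.2) (x, y) :=
  hϕ.hasDerivAt_partialX.deriv

theorem phY_eq_partialY {ϕ : ℝ → ℝ → ℝ} {x y : ℝ}
    (hϕ : DifferentiableAt ℝ (fun p : ℝ × ℝ => ϕ p.1 p.2) (x, y)) :
    phY ϕ x y = partialY (fun p : ℝ × ℝ => ϕ p.1 p.2) (x, y) :=
  hϕ.hasDerivAt_partialY.deriv

end PartialDerivatives

section Subgraph

variable {η : ℝ → ℝ} {b : ℝ} {f₁ f₂ : ℝ × ℝ → ℝ}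

def subgraphChart (η : ℝ → ℝ) (b : ℝ) (p : ℝ × ℝ) : ℝ × ℝ := (p.1, b + (η p.1 - b) * p.2)

def piolaX (η : ℝ → ℝ) (b : ℝ) (f₁ : ℝ × ℝ → ℝ) (p : ℝ × ℝ) : ℝ :=
  (η p.1 - b) * f₁ (subgraphChart η b p)

def piolaY (η : ℝ → ℝ) (b : ℝ) (f₁ f₂ : ℝ × ℝ → ℝ) (p : ℝ × ℝ) : ℝ :=
  f₂ (subgraphChart η b p) - p.2 * deriv η p.1 * f₁ (subgraphChart η b p)

theorem subgraphChart_snd_mem_uIcc {x t : ℝ} (ht : t ∈ uIcc (0 : ℝ) 1) :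
    (subgraphChart η b (x, t)).2 ∈ uIcc b (η x) := by
  rw [uIcc_of_le zero_le_one] at ht
  simpa [subgraphChart, mul_comm] using
    (convex_uIcc b (η x)).add_smul_sub_mem left_mem_uIcc right_mem_uIcc ht

theorem differentiable_piolaX (hη : Differentiable ℝ η) (hf₁ : Differentiable ℝ f₁) :
    Differentiable ℝ (piolaX η b f₁) := by
  unfold piolaX subgraphChart
  fun_prop

theorem differentiable_piolaY (hη : Differentiable ℝ η) (hη' : Differentiable ℝ (deriv η))
    (hf₁ : Differentiable ℝ f₁) (hf₂ : Differentiable ℝ f₂) :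
    Differentiable ℝ (piolaY η b f₁ f₂) := by
  unfold piolaY subgraphChart
  fun_prop

theorem partialX_piolaX_add_partialY_piolaY (hη : Differentiable ℝ η)
    (hη' : Differentiable ℝ (deriv η)) (hf₁ : Differentiable ℝ f₁) (hf₂ : Differentiable ℝ f₂)
    (x t : ℝ) :
    partialX (piolaX η b f₁) (x, t) + partialY (piolaY η b f₁ f₂) (x, t)
      = (η x - b) * (partialX f₁ (subgraphChart η b (x, t))
          + partialY f₂ (subgraphChart η b (x, t))) := by
  have hu : HasDerivAt (fun x' => b + (η x' - b) * t) (deriv η x * t) x := by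
    simpa using (((hη x).hasDerivAt.sub_const b).mul_const t).const_add b
  have hv : HasDerivAt (fun t' => b + (η x - b) * t') (η x - b) t := by
    simpa using ((hasDerivAt_id t).const_mul (η x - b)).const_add b
  set z := subgraphChart η b (x, t)
  have hX : HasDerivAt (fun x' => piolaX η b f₁ (x', t))
      (deriv η x * f₁ z + (η x - b) * (1 * partialX f₁ z + deriv η x * t * partialY f₁ z)) x :=
    ((hη x).hasDerivAt.sub_const b).mul ((hf₁ _).hasDerivAt_comp_prodMk (hasDerivAt_id x) hu)
  have hY : HasDerivAt (fun t' => piolaY η b f₁ f₂ (x, t'))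
      ((0 * partialX f₂ z + (η x - b) * partialY f₂ z)
        - (1 * deriv η x * f₁ z + t * deriv η x * (0 * partialX f₁ z + (η x - b) * partialY f₁ z)))
      t :=
    ((hf₂ _).hasDerivAt_comp_prodMk (hasDerivAt_const t x) hv).sub
      (((hasDerivAt_id t).mul_const (deriv η x)).mul
        ((hf₁ _).hasDerivAt_comp_prodMk (hasDerivAt_const t x) hv))
  rw [((differentiable_piolaX hη hf₁) _).hasDerivAt_partialX.unique hX,
    ((differentiable_piolaY hη hη' hf₁ hf₂) _).hasDerivAt_partialY.unique hY]
  ring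

theorem integral_boundary_flux_subgraph_eq_zero {a c : ℝ} (hη : Differentiable ℝ η)
    (hη' : Differentiable ℝ (deriv η)) (hf₁ : Differentiable ℝ f₁) (hf₂ : Differentiable ℝ f₂)
    (hdiv : ∀ x ∈ uIcc a c, ∀ y ∈ uIcc b (η x), partialX f₁ (x, y) + partialY f₂ (x, y) = 0) :
    (∫ x in a..c, (f₂ (x, η x) - deriv η x * f₁ (x, η x))) - (∫ x in a..c, f₂ (x, b))
      + (∫ y in b..η c, f₁ (c, y)) - (∫ y in b..η a, f₁ (a, y)) = 0 := by
  have hG₁ := differentiable_piolaX (b := b) hη hf₁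
  have hG₂ := differentiable_piolaY (b := b) hη hη' hf₁ hf₂
  have hdivG : EqOn (fun p => partialX (piolaX η b f₁) p + partialY (piolaY η b f₁ f₂) p) 0
      (uIcc a c ×ˢ uIcc 0 1) := by
    rintro ⟨x, t⟩ ⟨hx, ht⟩
    dsimp only
    rw [Pi.zero_apply, partialX_piolaX_add_partialY_piolaY hη hη' hf₁ hf₂]
    exact mul_eq_zero_of_right _ (hdiv x hx _ (subgraphChart_snd_mem_uIcc ht))
  have hgreen := integral2_divergence_prod_of_hasFDerivAt (piolaX η b f₁) (piolaY η b f₁ f₂)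
    (fderiv ℝ (piolaX η b f₁)) (fderiv ℝ (piolaY η b f₁ f₂)) a 0 c 1
    hG₁.continuous.continuousOn hG₂.continuous.continuousOn
    (fun p _ => (hG₁ p).hasFDerivAt) (fun p _ => (hG₂ p).hasFDerivAt)
    (integrableOn_zero.congr_fun hdivG.symm (measurableSet_uIcc.prod measurableSet_uIcc))
  have hinner : ∀ x, ∫ t in (0:ℝ)..1, piolaX η b f₁ (x, t) = ∫ y in b..η x, f₁ (x, y) := by
    intro x
    simpa [piolaX, subgraphChart] using
      intervalIntegral.smul_integral_comp_add_mul (a := 0) (b := 1) (fun y => f₁ (x, y)) (η x - b) b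
  have hzero : (∫ x in a..c, ∫ t in (0:ℝ)..1,
      (fderiv ℝ (piolaX η b f₁) (x, t) (1, 0) + fderiv ℝ (piolaY η b f₁ f₂) (x, t) (0, 1))) = 0 := by
    refine (intervalIntegral.integral_congr fun x hx => ?_).trans intervalIntegral.integral_zero
    exact (intervalIntegral.integral_congr fun t ht => hdivG ⟨hx, ht⟩).trans
      intervalIntegral.integral_zero
  simp only [hzero, hinner, piolaY, subgraphChart] at hgreen
  simpa using hgreen.symm

end Subgraph

section Rellich

variable {f : ℝ × ℝ → ℝ}

def rellichX (f : ℝ × ℝ → ℝ) (z : ℝ × ℝ) : ℝ :=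
  z.1 * (partialX f z ^ 2 - partialY f z ^ 2) / 2 + z.2 * (partialX f z * partialY f z)

def rellichY (f : ℝ × ℝ → ℝ) (z : ℝ × ℝ) : ℝ :=
  z.1 * (partialX f z * partialY f z) + z.2 * (partialY f z ^ 2 - partialX f z ^ 2) / 2

theorem ContDiff.differentiable_rellichX (hf : ContDiff ℝ 2 f) : Differentiable ℝ (rellichX f) := by
  have := hf.differentiable_partialX
  have := hf.differentiable_partialY
  unfold rellichX
  fun_prop

theorem ContDiff.differentiable_rellichY (hf : ContDiff ℝ 2 f) : Differentiable ℝ (rellichY f) := by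
  have := hf.differentiable_partialX
  have := hf.differentiable_partialY
  unfold rellichY
  fun_prop

theorem partialX_rellichX_add_partialY_rellichY (hf : ContDiff ℝ 2 f) (x y : ℝ) :
    partialX (rellichX f) (x, y) + partialY (rellichY f) (x, y)
      = (x * partialX f (x, y) + y * partialY f (x, y))
        * (partialX (partialX f) (x, y) + partialY (partialY f) (x, y)) := by
  have hPx := (hf.differentiable_partialX (x, y)).hasDerivAt_partialX
  have hPy := (hf.differentiable_partialX (x, y)).hasDerivAt_partialY
  have hQx := (hf.differentiable_partialY (x, y)).hasDerivAt_partialX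
  have hQy := (hf.differentiable_partialY (x, y)).hasDerivAt_partialY
  have hX := ((((hasDerivAt_id x).mul ((hPx.pow 2).sub (hQx.pow 2))).div_const 2).add
    ((hPx.mul hQx).const_mul y))
  have hY := (((hPy.mul hQy).const_mul x).add
    ((((hasDerivAt_id y).mul ((hQy.pow 2).sub (hPy.pow 2))).div_const 2)))
  rw [(hf.differentiable_rellichX (x, y)).hasDerivAt_partialX.unique hX,
    (hf.differentiable_rellichY (x, y)).hasDerivAt_partialY.unique hY, hf.partialY_partialX_comm]
  simp only [id, Pi.sub_apply, Pi.pow_apply]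
  push_cast
  ring

theorem rellichX_of_partialX_eq_zero {x y : ℝ} (hP : partialX f (x, y) = 0) :
    rellichX f (x, y) = -(x / 2) * partialY f (x, y) ^ 2 := by
  rw [rellichX, hP]
  ring

theorem rellichY_of_partialY_eq_zero {x y : ℝ} (hQ : partialY f (x, y) = 0) :
    rellichY f (x, y) = -(y / 2) * partialX f (x, y) ^ 2 := by
  rw [rellichY, hQ]
  ring

theorem rellichY_sub_mul_rellichX (x y d : ℝ) :
    rellichY f (x, y) - d * rellichX f (x, y)
      = (partialY f (x, y) - d * partialX f (x, y)) * (x * (partialX f (x, y) + d * partialY f (x, y)))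
        - 1 / 2 * ((y - x * d) * (partialX f (x, y) ^ 2 + partialY f (x, y) ^ 2
          - 2 * partialY f (x, y) * (partialY f (x, y) - d * partialX f (x, y)))) := by
  rw [rellichX, rellichY]
  ring

end Rellich

theorem pohozaev_subgraph {L h : ℝ} (hL : 0 ≤ L) {η : ℝ → ℝ} (hη : ContDiff ℝ 2 η)
    {f : ℝ × ℝ → ℝ} (hf : ContDiff ℝ 2 f) (hηb : ∀ x ∈ Icc 0 L, -h ≤ η x)
    (hlap : ∀ x ∈ Icc 0 L, ∀ y ∈ Icc (-h) (η x),
      partialX (partialX f) (x, y) + partialY (partialY f) (x, y) = 0)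
    (hbc0 : ∀ y ∈ Icc (-h) (η 0), partialX f (0, y) = 0)
    (hbcL : ∀ y ∈ Icc (-h) (η L), partialX f (L, y) = 0)
    (hbot : ∀ x ∈ Icc 0 L, partialY f (x, -h) = 0) :
    (∫ x in 0..L, (partialY f (x, η x) - deriv η x * partialX f (x, η x))
        * (x * (partialX f (x, η x) + deriv η x * partialY f (x, η x))))
      = L / 2 * (∫ y in (-h)..(η L), partialY f (L, y) ^ 2)
        + h / 2 * (∫ x in 0..L, partialX f (x, -h) ^ 2)
        + 1 / 2 * ∫ x in 0..L, (η x - x * deriv η x)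
            * (partialX f (x, η x) ^ 2 + partialY f (x, η x) ^ 2
                - 2 * partialY f (x, η x)
                  * (partialY f (x, η x) - deriv η x * partialX f (x, η x))) := by
  have hflux := integral_boundary_flux_subgraph_eq_zero (a := 0) (c := L) (b := -h)
    (hη.differentiable two_ne_zero) ((hη.deriv' (n := 1)).differentiable one_ne_zero)
    hf.differentiable_rellichX hf.differentiable_rellichY fun x hx y hy => by
      rw [uIcc_of_le hL] at hx
      rw [uIcc_of_le (hηb x hx)] at hy
      rw [partialX_rellichX_add_partialY_rellichY hf, hlap x hx y hy, mul_zero]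
  have hleft : ∫ y in (-h)..η 0, rellichX f (0, y) = 0 := by
    refine (intervalIntegral.integral_congr fun y hy => ?_).trans intervalIntegral.integral_zero
    rw [uIcc_of_le (hηb 0 ⟨le_rfl, hL⟩)] at hy
    simp [rellichX_of_partialX_eq_zero (hbc0 y hy)]
  have hright : ∫ y in (-h)..η L, rellichX f (L, y)
      = -(L / 2) * ∫ y in (-h)..η L, partialY f (L, y) ^ 2 := by
    rw [← intervalIntegral.integral_const_mul]
    refine intervalIntegral.integral_congr fun y hy => ?_
    rw [uIcc_of_le (hηb L ⟨hL, le_rfl⟩)] at hy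
    exact rellichX_of_partialX_eq_zero (hbcL y hy)
  have hbottom : ∫ x in 0..L, rellichY f (x, -h) = h / 2 * ∫ x in 0..L, partialX f (x, -h) ^ 2 := by
    rw [← intervalIntegral.integral_const_mul]
    refine intervalIntegral.integral_congr fun x hx => ?_
    rw [uIcc_of_le hL] at hx
    rw [rellichY_of_partialY_eq_zero (hbot x hx), neg_div, neg_neg]
  have hP := hf.differentiable_partialX.continuous
  have hQ := hf.differentiable_partialY.continuous
  have hη'c := hη.continuous_deriv one_le_two
  have hsurface : (∫ x in 0..L, (rellichY f (x, η x) - deriv η x * rellichX f (x, η x)))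
      = (∫ x in 0..L, (partialY f (x, η x) - deriv η x * partialX f (x, η x))
          * (x * (partialX f (x, η x) + deriv η x * partialY f (x, η x))))
        - 1 / 2 * ∫ x in 0..L, (η x - x * deriv η x)
            * (partialX f (x, η x) ^ 2 + partialY f (x, η x) ^ 2
                - 2 * partialY f (x, η x)
                  * (partialY f (x, η x) - deriv η x * partialX f (x, η x))) := by
    simp only [rellichY_sub_mul_rellichX]
    rw [intervalIntegral.integral_sub (by apply Continuous.intervalIntegrable; fun_prop)
      (by apply Continuous.intervalIntegrable; fun_prop), intervalIntegral.integral_const_mul]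
  linarith

theorem pohozaev_2d_general
    (L₁ h : ℝ) (hL : 0 < L₁) (hh : 0 < h)
    (η : ℝ → ℝ) (ϕ : ℝ → ℝ → ℝ)
    (hη : ContDiff ℝ 2 η)
    (hϕ : ContDiff ℝ 2 (fun p : ℝ × ℝ => ϕ p.1 p.2))
    (hηb : ∀ x ∈ Icc (0:ℝ) L₁, -h / 2 ≤ η x)
    (hlap : ∀ x ∈ Icc (0:ℝ) L₁, ∀ y ∈ Icc (-h) (η x),
      deriv (fun x' => phX ϕ x' y) x + deriv (fun y' => phY ϕ x y') y = 0)
    (hbc0 : ∀ y ∈ Icc (-h) (η 0), phX ϕ 0 y = 0)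
    (hbcL : ∀ y ∈ Icc (-h) (η L₁), phX ϕ L₁ y = 0)
    (hbot : ∀ x ∈ Icc (0:ℝ) L₁, phY ϕ x (-h) = 0) :
    (∫ x in (0:ℝ)..L₁,
        (phY ϕ x (η x) - deriv η x * phX ϕ x (η x))
          * (x * deriv (fun x' => ϕ x' (η x')) x))
      = L₁ / 2 * (∫ y in (-h)..(η L₁), (phY ϕ L₁ y) ^ 2)
        + h / 2 * (∫ x in (0:ℝ)..L₁, (phX ϕ x (-h)) ^ 2)
        + 1 / 2 * ∫ x in (0:ℝ)..L₁,
            (η x - x * deriv η x)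
              * ((phX ϕ x (η x)) ^ 2 + (phY ϕ x (η x)) ^ 2
                  - 2 * phY ϕ x (η x)
                      * (phY ϕ x (η x) - deriv η x * phX ϕ x (η x))) := by
  have hϕd := hϕ.differentiable two_ne_zero
  have hψ : ∀ x, deriv (fun x' => ϕ x' (η x')) x
      = partialX (fun p : ℝ × ℝ => ϕ p.1 p.2) (x, η x)
        + deriv η x * partialY (fun p : ℝ × ℝ => ϕ p.1 p.2) (x, η x) := fun x => by
    simpa using ((hϕd _).hasDerivAt_comp_prodMk (hasDerivAt_id x)
      ((hη.differentiable two_ne_zero) x).hasDerivAt).deriv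
  have hpartial : ∀ x y, deriv (fun x' => phX ϕ x' y) x + deriv (fun y' => phY ϕ x y') y
      = partialX (partialX (fun p : ℝ × ℝ => ϕ p.1 p.2)) (x, y)
        + partialY (partialY (fun p : ℝ × ℝ => ϕ p.1 p.2)) (x, y) := fun x y => by
    simp only [phX_eq_partialX (hϕd _), phY_eq_partialY (hϕd _)]
    rw [(hϕ.differentiable_partialX _).hasDerivAt_partialX.deriv,
      (hϕ.differentiable_partialY _).hasDerivAt_partialY.deriv]
  simp only [hpartial] at hlap
  simp only [hψ, phX_eq_partialX (hϕd _), phY_eq_partialY (hϕd _)] at hbc0 hbcL hbot ⊢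
  exact pohozaev_subgraph hL.le hη hϕ (fun x hx => by linarith [hηb x hx]) hlap hbc0 hbcL hbot

/-- Pohozaev identity for the Dirichlet-to-Neumann operator,
two-dimensional (one-dimensional surface) static case.  Here
`ψ(x) = ϕ(x,η(x))`, `G(η)ψ(x) = ∂_yϕ(x,η(x)) - ∂ₓη(x)·∂ₓϕ(x,η(x))`,
`B(x) = ∂_yϕ(x,η(x))` and `V(x) = ∂ₓϕ(x,η(x))`. -/
theorem pohozaev_2d
    (L₁ h : ℝ) (hL : 0 < L₁) (hh : 0 < h)
    (η : ℝ → ℝ) (ϕ : ℝ → ℝ → ℝ)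
    (hη : ContDiff ℝ 2 η)
    (hϕ : ContDiff ℝ 2 (fun p : ℝ × ℝ => ϕ p.1 p.2))
    (hηb : ∀ x ∈ Icc (0:ℝ) L₁, -h / 2 ≤ η x)
    (hη0 : deriv η 0 = 0) (hηL : deriv η L₁ = 0)
    (hlap : ∀ x ∈ Icc (0:ℝ) L₁, ∀ y ∈ Icc (-h) (η x),
      deriv (fun x' => phX ϕ x' y) x + deriv (fun y' => phY ϕ x y') y = 0)
    (hbc0 : ∀ y ∈ Icc (-h) (η 0), phX ϕ 0 y = 0)
    (hbcL : ∀ y ∈ Icc (-h) (η L₁), phX ϕ L₁ y = 0)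
    (hbot : ∀ x ∈ Icc (0:ℝ) L₁, phY ϕ x (-h) = 0) :
    (∫ x in (0:ℝ)..L₁,
        (phY ϕ x (η x) - deriv η x * phX ϕ x (η x))
          * (x * deriv (fun x' => ϕ x' (η x')) x))
      = L₁ / 2 * (∫ y in (-h)..(η L₁), (phY ϕ L₁ y) ^ 2)
        + h / 2 * (∫ x in (0:ℝ)..L₁, (phX ϕ x (-h)) ^ 2)
        + 1 / 2 * ∫ x in (0:ℝ)..L₁,
            (η x - x * deriv η x)
              * ((phX ϕ x (η x)) ^ 2 + (phY ϕ x (η x)) ^ 2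
                  - 2 * phY ϕ x (η x)
                      * (phY ϕ x (η x) - deriv η x * phX ϕ x (η x))) :=
  pohozaev_2d_general L₁ h hL hh η ϕ hη hϕ hηb hlap hbc0 hbcL hbot
end
end
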